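/- Let F• be an acyclic complex of flat left R-modules with cycles C_n = ker(F_n → F_{n+1}), and let X be a right R-module. Then the complex X ⊗_R F• is acyclic if and only if Tor_1^R(X, C_n) = 0 for all n ∈ Z. -/

import Mathlib

/-!
Acyclicity cuts `F•` into short exact sequences `0 → C n → F n → C (n + 1) → 0`. Since `X ⊗ -` is
right exact, `X ⊗ F•` is exact at `F (n + 1)` exactly when `X ⊗ C (n + 2) → X ⊗ F (n + 2)` is
injective, i.e. when `Tor₁(X, C (n + 3))` vanishes as computed from the flat presentation
`F (n + 2) → C (n + 3)`. By Schanuel's lemma (a pullback of two presentations) one flat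
presentation suffices to compute `Tor₁`.
-/

universe u v

/-- A `ℤ`-indexed complex is *acyclic* if it is exact at every degree. -/
def IsAcyclicComplex {R : Type v} [Ring R] (M : ℤ → Type u)
    [∀ n, AddCommGroup (M n)] [∀ n, Module R (M n)]
    (d : ∀ n, M n →ₗ[R] M (n + 1)) : Prop :=
  ∀ n, LinearMap.range (d n) = LinearMap.ker (d (n + 1))

/-- `Tor₁^R(X, C) = 0`, phrased via the standard syzygy characterization: for every
short exact sequence `0 → K → E → C → 0` with `E` flat, the map `X ⊗ K → X ⊗ E`
is injective. -/
def Tor1Zero (R : Type u) [CommRing R] (X C : Type u) [AddCommGroup X] [Module R X]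
    [AddCommGroup C] [Module R C] : Prop :=
  ∀ (E : Type u) [AddCommGroup E] [Module R E] [Module.Flat R E],
    ∀ (K : Submodule R E) (p : E →ₗ[R] C),
      Function.Surjective p → LinearMap.ker p = K →
        Function.Injective (LinearMap.lTensor X K.subtype)

open LinearMap TensorProduct Function

section

variable {R : Type*} [CommRing R]

lemma LinearMap.ker_comp_eq_ker_iff_injective {M N P : Type*} [AddCommGroup M] [AddCommGroup N]
    [AddCommGroup P] [Module R M] [Module R N] [Module R P] {f : M →ₗ[R] N} (g : N →ₗ[R] P)
    (hf : Surjective f) : ker (g ∘ₗ f) = ker f ↔ Injective g := by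
  refine ⟨fun h => ?_, fun hg => ker_comp_of_ker_eq_bot f (ker_eq_bot.mpr hg)⟩
  rw [← ker_eq_bot, eq_bot_iff]
  intro y hy
  obtain ⟨x, rfl⟩ := hf y
  exact (Submodule.mem_bot R).mpr (h ▸ hy : x ∈ ker f)

lemma LinearMap.injective_comp_of_exact {K L P E B : Type*} [AddCommGroup K] [AddCommGroup L]
    [AddCommGroup P] [AddCommGroup E] [AddCommGroup B] [Module R K] [Module R L] [Module R P]
    [Module R E] [Module R B] {j : L →ₗ[R] P} {j' : K →ₗ[R] P} {π₁ : P →ₗ[R] E}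
    {π₂ : P →ₗ[R] B} (hexact : Exact j π₁) (hj' : Injective j') (hj : Injective (π₂ ∘ₗ j))
    (hzero : π₂ ∘ₗ j' = 0) : Injective (π₁ ∘ₗ j') := by
  rw [← ker_eq_bot, eq_bot_iff]
  intro t ht
  obtain ⟨s, hs⟩ := (hexact (j' t)).mp ht
  have hs0 : s = 0 := hj <| by simp [hs, ← comp_apply, hzero]
  exact hj' (by simp [← hs, hs0])

lemma LinearMap.lTensor_ker_subtype_injective_of_flat {X B C E : Type*} [AddCommGroup X]
    [AddCommGroup B] [AddCommGroup C] [AddCommGroup E] [Module R X] [Module R B] [Module R C]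
    [Module R E] [Module.Flat R B] {p : B →ₗ[R] C} (hp : Surjective p)
    (hinj : Injective (lTensor X (ker p).subtype)) {q : E →ₗ[R] C} (hq : Surjective q) :
    Injective (lTensor X (ker q).subtype) := by
  -- In the pullback `P = E ×_C B` the projections have kernels `ker p` and `ker q`; as `B` is
  -- flat, `X ⊗ ker q → X ⊗ P` stays injective, and the chase transports this to `X ⊗ E`.
  let P := ker (q ∘ₗ fst R E B - p ∘ₗ snd R E B)
  have mem_P {x : E × B} : x ∈ P ↔ q x.1 = p x.2 := by simp [P, sub_eq_zero]
  let π₁ := fst R E B ∘ₗ P.subtype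
  let π₂ := snd R E B ∘ₗ P.subtype
  let j : ker p →ₗ[R] P :=
    codRestrict P (inr R E B ∘ₗ (ker p).subtype) fun b => mem_P.mpr (by simp)
  let j' : ker q →ₗ[R] P :=
    codRestrict P (inl R E B ∘ₗ (ker q).subtype) fun e => mem_P.mpr (by simp)
  have hπ₁ : Surjective π₁ := fun e =>
    let ⟨b, hb⟩ := hp (q e); ⟨⟨(e, b), mem_P.mpr hb.symm⟩, rfl⟩
  have hπ₂ : Surjective π₂ := fun b =>
    let ⟨e, he⟩ := hq (p b); ⟨⟨(e, b), mem_P.mpr he⟩, rfl⟩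
  have exact₁ : Exact j π₁ := by
    rintro ⟨⟨e, b⟩, h⟩
    refine ⟨fun (he : e = 0) => ⟨⟨b, ?_⟩, by subst he; rfl⟩, fun ⟨c, hc⟩ => hc ▸ rfl⟩
    simpa [he] using (mem_P.mp h).symm
  have exact₂ : Exact j' π₂ := by
    rintro ⟨⟨e, b⟩, h⟩
    refine ⟨fun (hb : b = 0) => ⟨⟨e, ?_⟩, by subst hb; rfl⟩, fun ⟨c, hc⟩ => hc ▸ rfl⟩
    simpa [hb] using mem_P.mp h
  have hj' : Injective j' := fun a b hab => Subtype.ext congr($hab.1.1)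
  have := injective_comp_of_exact (π₂ := lTensor X π₂) (lTensor_exact X exact₁ hπ₁)
    (lTensor_injective_of_exact_of_flat π₂ hπ₂ j' hj' exact₂ X)
    (by rwa [← lTensor_comp]) (by rw [← lTensor_comp]; exact lTensor_zero X)
  rwa [← lTensor_comp] at this

end

lemma tor1Zero_iff_lTensor_injective {R X B C : Type u} [CommRing R] [AddCommGroup X]
    [AddCommGroup B] [AddCommGroup C] [Module R X] [Module R B] [Module R C] [Module.Flat R B]
    {p : B →ₗ[R] C} (hp : Surjective p) :
    Tor1Zero R X C ↔ Injective (lTensor X (ker p).subtype) := by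
  refine ⟨fun h => h B (ker p) p hp rfl, fun hinj E _ _ _ K q hq hK => ?_⟩
  subst hK
  exact lTensor_ker_subtype_injective_of_flat hp hinj hq

namespace IsAcyclicComplex

variable {R : Type*} [CommRing R] {F : ℤ → Type*} [∀ n, AddCommGroup (F n)]
  [∀ n, Module R (F n)] {d : ∀ n, F n →ₗ[R] F (n + 1)} (hac : IsAcyclicComplex F d)
include hac

def toCycles (n : ℤ) : F n →ₗ[R] ker (d (n + 1)) :=
  (d n).codRestrict _ fun x => hac n ▸ mem_range_self (d n) x

lemma subtype_comp_toCycles (n : ℤ) : (ker (d (n + 1))).subtype ∘ₗ hac.toCycles n = d n :=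
  rfl

lemma toCycles_surjective (n : ℤ) : Surjective (hac.toCycles n) := by
  rintro ⟨y, hy⟩
  obtain ⟨x, rfl⟩ : y ∈ range (d n) := hac n ▸ hy
  exact ⟨x, rfl⟩

lemma exact_subtype_toCycles (n : ℤ) : Exact (ker (d n)).subtype (hac.toCycles n) :=
  fun x => by simp [toCycles, Subtype.ext_iff]

lemma exact_lTensor_iff_injective (X : Type*) [AddCommGroup X] [Module R X] (n : ℤ) :
    range (lTensor X (d n)) = ker (lTensor X (d (n + 1))) ↔
      Injective (lTensor X (ker (d (n + 1 + 1))).subtype) := by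
  have hrange : range (lTensor X (d n)) = ker (lTensor X (hac.toCycles (n + 1))) := by
    rw [(lTensor_exact X (hac.exact_subtype_toCycles _)
        (hac.toCycles_surjective _)).linearMap_ker_eq, ← hac.subtype_comp_toCycles n,
      lTensor_comp, range_comp_of_range_eq_top]
    exact range_eq_top.mpr (lTensor_surjective X (hac.toCycles_surjective n))
  rw [hrange, eq_comm, ← hac.subtype_comp_toCycles (n + 1), lTensor_comp]
  exact ker_comp_eq_ker_iff_injective _ (lTensor_surjective X (hac.toCycles_surjective _))

end IsAcyclicComplex

theorem tensor_acyclic_iff_tor_vanishes_general {R : Type u} [CommRing R]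
    (F : ℤ → Type u) [∀ n, AddCommGroup (F n)] [∀ n, Module R (F n)]
    [∀ n, Module.Flat R (F n)]
    (d : ∀ n, F n →ₗ[R] F (n + 1))
    (hac : IsAcyclicComplex F d)
    (X : Type u) [AddCommGroup X] [Module R X] :
    IsAcyclicComplex (fun n => TensorProduct R X (F n))
        (fun n => LinearMap.lTensor X (d n)) ↔
      ∀ n : ℤ, Tor1Zero R X ↥(LinearMap.ker (d n)) := by
  have htor (n : ℤ) :
      Tor1Zero R X (ker (d (n + 1))) ↔ Injective (lTensor X (ker (d n)).subtype) := by
    rw [tor1Zero_iff_lTensor_injective (hac.toCycles_surjective n), IsAcyclicComplex.toCycles,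
      ker_codRestrict]
  refine (forall_congr' (hac.exact_lTensor_iff_injective X)).trans ⟨fun h n => ?_, fun h n => ?_⟩
  · obtain ⟨m, rfl⟩ : ∃ m, n = m + 1 + 1 + 1 := ⟨n - 3, by omega⟩
    exact (htor _).mpr (h m)
  · exact (htor _).mp (h (n + 1 + 1 + 1))

/-- Let `F•` be an acyclic complex of flat `R`-modules with cycles `C n = ker (F n → F (n+1))`,
and `X` a module.  Then `X ⊗ F•` is acyclic iff `Tor₁(X, C n) = 0` for all `n`. -/
theorem tensor_acyclic_iff_tor_vanishes {R : Type u} [CommRing R]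
    (F : ℤ → Type u) [∀ n, AddCommGroup (F n)] [∀ n, Module R (F n)]
    [∀ n, Module.Flat R (F n)]
    (d : ∀ n, F n →ₗ[R] F (n + 1))
    (hd2 : ∀ n, (d (n + 1)).comp (d n) = 0)
    (hac : IsAcyclicComplex F d)
    (X : Type u) [AddCommGroup X] [Module R X] :
    IsAcyclicComplex (fun n => TensorProduct R X (F n))
        (fun n => LinearMap.lTensor X (d n)) ↔
      ∀ n : ℤ, Tor1Zero R X ↥(LinearMap.ker (d n)) :=
  tensor_acyclic_iff_tor_vanishes_general F d hac X
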